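/- Let S_n be the sum of n i.i.d. Bernoulli(p) random variables (0 < p < 1) and let P_λ denote the Poisson distribution with mean λ = np. Then d_TV(L(S_n), P_{np}) ≤ min{np², p}. -/

import Mathlib

open MeasureTheory ProbabilityTheory

/-- Poisson distribution with mean `lam` as a measure on `ℕ`. -/
noncomputable def poissonNat (lam : ℝ) : Measure ℕ :=
  Measure.sum fun k => (ENNReal.ofReal (Real.exp (-lam) * lam ^ k / k.factorial)) • Measure.dirac k

noncomputable def dTVNat (μ ν : Measure ℕ) : ℝ :=
  ⨆ A : Set ℕ, |(μ A).toReal - (ν A).toReal|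

open Finset
open scoped ENNReal

namespace LeCamAux

noncomputable def ppmf (lam : ℝ) (k : ℕ) : ℝ := Real.exp (-lam) * lam ^ k / k.factorial

noncomputable def bpmf (p : ℝ) (n k : ℕ) : ℝ := n.choose k * p ^ k * (1 - p) ^ (n - k)

lemma ppmf_nonneg {lam : ℝ} (hlam : 0 ≤ lam) (k : ℕ) : 0 ≤ ppmf lam k := by
  unfold ppmf
  positivity

lemma summable_ppmf {lam : ℝ} : Summable (ppmf lam) := by
  have h : ppmf lam = fun k => Real.exp (-lam) * (lam ^ k / k.factorial) := by
    funext k; unfold ppmf; ring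
  rw [h]
  exact (Real.summable_pow_div_factorial lam).mul_left _

lemma tsum_ppmf {lam : ℝ} : ∑' k, ppmf lam k = 1 := by
  have h : ∑' k, ppmf lam k = Real.exp (-lam) * ∑' k : ℕ, lam ^ k / k.factorial := by
    rw [← tsum_mul_left]
    congr 1; funext k; unfold ppmf; ring
  have h2 : ∑' k : ℕ, lam ^ k / (k.factorial : ℝ) = Real.exp lam := by
    rw [Real.exp_eq_exp_ℝ, NormedSpace.exp_eq_tsum_div]
  rw [h, h2, ← Real.exp_add]
  simp

lemma bpmf_nonneg {p : ℝ} (hp0 : 0 ≤ p) (hp1 : p ≤ 1) (n k : ℕ) : 0 ≤ bpmf p n k := by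
  unfold bpmf
  have : 0 ≤ 1 - p := by linarith
  positivity

lemma bpmf_eq_zero {p : ℝ} {n k : ℕ} (h : n < k) : bpmf p n k = 0 := by
  unfold bpmf
  rw [Nat.choose_eq_zero_of_lt h]
  simp

lemma sum_bpmf {p : ℝ} (n : ℕ) : ∑ k ∈ range (n + 1), bpmf p n k = 1 := by
  have := add_pow p (1 - p) n
  simp only [add_sub_cancel, one_pow] at this
  rw [this]
  apply Finset.sum_congr rfl
  intro k _; unfold bpmf; ring

lemma summable_bpmf {p : ℝ} (n : ℕ) : Summable (bpmf p n) := by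
  apply summable_of_ne_finset_zero (s := range (n + 1))
  intro k hk
  exact bpmf_eq_zero (by simpa using hk)

/-- Evaluation of a weighted sum of Dirac measures. -/
lemma wsum_apply (w : ℕ → ℝ) (A : Set ℕ) :
    (Measure.sum fun k => (ENNReal.ofReal (w k)) • Measure.dirac k) A
      = ∑' k, ENNReal.ofReal (A.indicator w k) := by
  rw [Measure.sum_apply _ (MeasurableSet.of_discrete (s := A))]
  congr 1; funext k
  rw [Measure.smul_apply, Measure.dirac_apply' _ (MeasurableSet.of_discrete (s := A))]
  by_cases hk : k ∈ A
  · simp [Set.indicator_of_mem hk]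
  · simp [Set.indicator_of_notMem hk]

lemma wsum_apply_toReal {w : ℕ → ℝ} (hw : ∀ k, 0 ≤ w k) (hs : Summable w) (A : Set ℕ) :
    ((Measure.sum fun k => (ENNReal.ofReal (w k)) • Measure.dirac k) A).toReal
      = ∑' k, A.indicator w k := by
  rw [wsum_apply, ← ENNReal.ofReal_tsum_of_nonneg (fun k => Set.indicator_apply_nonneg fun _ => hw k)
    (hs.indicator A), ENNReal.toReal_ofReal]
  exact tsum_nonneg (fun k => Set.indicator_apply_nonneg fun _ => hw k)

lemma wsum_singleton (w : ℕ → ℝ) (k : ℕ) :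
    (Measure.sum fun j => (ENNReal.ofReal (w j)) • Measure.dirac j) {k} = ENNReal.ofReal (w k) := by
  rw [wsum_apply]
  rw [tsum_eq_single k]
  · simp
  · intro j hj
    simp [Set.indicator_of_notMem, Set.mem_singleton_iff, hj]


lemma bpmf_zero_succ {p : ℝ} (n : ℕ) : bpmf p (n + 1) 0 = (1 - p) * bpmf p n 0 := by
  unfold bpmf
  simp [pow_succ]
  ring

lemma bpmf_pascal {p : ℝ} (n k : ℕ) :
    bpmf p (n + 1) (k + 1) = (1 - p) * bpmf p n (k + 1) + p * bpmf p n k := by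
  unfold bpmf
  rcases le_or_gt (k + 1) n with h | h
  · have hc : ((n + 1).choose (k + 1) : ℝ) = n.choose (k + 1) + n.choose k := by
      rw [Nat.choose_succ_succ]
      push_cast; ring
    have h1 : n + 1 - (k + 1) = (n - (k + 1)) + 1 := by omega
    have h2 : n - k = (n - (k + 1)) + 1 := by omega
    rw [hc, h1, h2]
    ring
  · rcases Nat.eq_or_lt_of_le h with heq | h'
    · obtain rfl : n = k := by omega
      simp [Nat.choose_succ_self_right, Nat.choose_self, Nat.choose_succ_self]
      ring
    · rw [Nat.choose_eq_zero_of_lt (by omega), Nat.choose_eq_zero_of_lt (by omega),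
        Nat.choose_eq_zero_of_lt (by omega)]
      simp

lemma bpmf_mul_succ {p : ℝ} (n k : ℕ) :
    ((k : ℝ) + 1) * bpmf p (n + 1) (k + 1) = (n + 1) * p * bpmf p n k := by
  unfold bpmf
  have hc : ((k : ℝ) + 1) * ((n + 1).choose (k + 1)) = (n + 1) * n.choose k := by
    have := Nat.add_one_mul_choose_eq n k
    have : ((n + 1) * n.choose k : ℕ) = ((n + 1).choose (k + 1) * (k + 1) : ℕ) := by
      simpa [Nat.succ_eq_add_one] using this
    have := congrArg (fun x : ℕ => (x : ℝ)) this
    push_cast at this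
    linarith
  have h2 : n + 1 - (k + 1) = n - k := by omega
  rw [h2]
  calc ((k : ℝ) + 1) * (↑((n + 1).choose (k + 1)) * p ^ (k + 1) * (1 - p) ^ (n - k))
      = (((k : ℝ) + 1) * ((n + 1).choose (k + 1))) * p ^ (k + 1) * (1 - p) ^ (n - k) := by ring
    _ = ((n : ℝ) + 1) * n.choose k * p ^ (k + 1) * (1 - p) ^ (n - k) := by rw [hc]
    _ = ((n : ℝ) + 1) * p * (↑(n.choose k) * p ^ k * (1 - p) ^ (n - k)) := by ring


lemma measure_sum_bernoulli {Ω : Type*} [MeasurableSpace Ω] {ι : Type*}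
    (P : Measure Ω) [IsProbabilityMeasure P]
    {p : ℝ} (hp0 : 0 < p) (hp1 : p < 1)
    (X : ι → Ω → ℕ) (hXmeas : ∀ i, Measurable (X i))
    (hindep : iIndepFun X P)
    (hBer1 : ∀ i, P (X i ⁻¹' {1}) = ENNReal.ofReal p)
    (hBer0 : ∀ i, P (X i ⁻¹' {0}) = ENNReal.ofReal (1 - p)) (s : Finset ι) :
    ∀ (k : ℕ), P ((fun ω => ∑ i ∈ s, X i ω) ⁻¹' {k}) = ENNReal.ofReal (bpmf p s.card k) := by
  classical
  induction s using Finset.induction_on with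
  | empty =>
    intro k
    cases k with
    | zero => simp [bpmf]
    | succ k =>
      have : ((fun ω : Ω => ∑ i ∈ (∅ : Finset ι), X i ω) ⁻¹' {k + 1}) = ∅ := by
        ext ω; simp
      rw [this]
      simp [bpmf]
  | @insert a s ha ih =>
    intro k
    set T : Ω → ℕ := fun ω => ∑ i ∈ s, X i ω with hT
    have hTmeas : Measurable T := Finset.measurable_sum s (fun i _ => hXmeas i)
    have hfun : (∑ i ∈ s, X i) = T := by funext ω; simp [hT, Finset.sum_apply]
    have hTX : IndepFun T (X a) P := by
      have := hindep.indepFun_finsetSum_of_notMem hXmeas ha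
      rwa [hfun] at this
    have hmul : ∀ (C B : Set ℕ), P (T ⁻¹' C ∩ X a ⁻¹' B) = P (T ⁻¹' C) * P (X a ⁻¹' B) :=
      fun C B => hTX.measure_inter_preimage_eq_mul C B MeasurableSet.of_discrete
        MeasurableSet.of_discrete
    set U : Set Ω := X a ⁻¹' {0, 1} with hUdef
    have hUmeas : MeasurableSet U := hXmeas a MeasurableSet.of_discrete
    have hU : P U = 1 := by
      have hsplit : ({0, 1} : Set ℕ) = {0} ∪ {1} := by ext x; simp; tauto
      have hdisj : Disjoint (X a ⁻¹' {0}) (X a ⁻¹' {1}) := by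
        apply Set.disjoint_left.mpr
        intro x h0 h1
        simp only [Set.mem_preimage, Set.mem_singleton_iff] at h0 h1
        omega
      rw [hUdef, hsplit, Set.preimage_union, measure_union hdisj
        (hXmeas a MeasurableSet.of_discrete), hBer0 a, hBer1 a,
        ← ENNReal.ofReal_add (by linarith) (by linarith)]
      norm_num
    have hUc : P Uᶜ = 0 := by
      rw [measure_compl hUmeas (measure_ne_top P U), hU, measure_univ, tsub_self]
    set E : Set Ω := (fun ω => ∑ i ∈ insert a s, X i ω) ⁻¹' {k} with hEdef
    have hEsum : E = (fun ω => X a ω + T ω) ⁻¹' {k} := by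
      rw [hEdef]
      ext ω
      simp [Finset.sum_insert ha, hT]
    have hPE : P E = P (E ∩ U) := by
      have h0 : P (E ∩ Uᶜ) = 0 :=
        le_antisymm (le_trans (measure_mono Set.inter_subset_right) hUc.le) zero_le
      have : P E ≤ P (E ∩ U) + P (E ∩ Uᶜ) := by
        calc P E = P ((E ∩ U) ∪ (E ∩ Uᶜ)) := by rw [Set.inter_union_compl]
        _ ≤ P (E ∩ U) + P (E ∩ Uᶜ) := measure_union_le _ _
      exact le_antisymm (by simpa [h0] using this) (measure_mono Set.inter_subset_left)
    have hcard : (insert a s).card = s.card + 1 := Finset.card_insert_of_notMem ha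
    cases k with
    | zero =>
      have hEU : E ∩ U = T ⁻¹' {0} ∩ X a ⁻¹' {0} := by
        rw [hEsum, hUdef]
        ext ω
        simp only [Set.mem_inter_iff, Set.mem_preimage, Set.mem_singleton_iff, Set.mem_insert_iff]
        omega
      rw [hPE, hEU, hmul, ih 0, hBer0 a, ← ENNReal.ofReal_mul
        (bpmf_nonneg hp0.le hp1.le _ _), hcard, bpmf_zero_succ]
      ring_nf
    | succ k =>
      have hEU : E ∩ U = (T ⁻¹' {k + 1} ∩ X a ⁻¹' {0}) ∪ (T ⁻¹' {k} ∩ X a ⁻¹' {1}) := by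
        rw [hEsum, hUdef]
        ext ω
        simp only [Set.mem_inter_iff, Set.mem_preimage, Set.mem_singleton_iff,
          Set.mem_insert_iff, Set.mem_union]
        omega
      have hdisj : Disjoint (T ⁻¹' {k + 1} ∩ X a ⁻¹' {0}) (T ⁻¹' {k} ∩ X a ⁻¹' {1}) := by
        apply Set.disjoint_left.mpr
        rintro x ⟨-, h0⟩ ⟨-, h1⟩
        simp only [Set.mem_preimage, Set.mem_singleton_iff] at h0 h1
        omega
      have hmeas2 : MeasurableSet (T ⁻¹' {k} ∩ X a ⁻¹' {1}) :=
        (hTmeas MeasurableSet.of_discrete).inter (hXmeas a MeasurableSet.of_discrete)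
      rw [hPE, hEU, measure_union hdisj hmeas2, hmul, hmul, ih (k + 1), ih k,
        hBer0 a, hBer1 a,
        ← ENNReal.ofReal_mul (bpmf_nonneg hp0.le hp1.le _ _),
        ← ENNReal.ofReal_mul (bpmf_nonneg hp0.le hp1.le _ _),
        ← ENNReal.ofReal_add (mul_nonneg (bpmf_nonneg hp0.le hp1.le _ _) (by linarith))
          (mul_nonneg (bpmf_nonneg hp0.le hp1.le _ _) hp0.le),
        hcard, bpmf_pascal]
      ring_nf
  

section Stein

variable {lam : ℝ}

/-- Poisson CDF. -/
noncomputable def Fc (lam : ℝ) (k : ℕ) : ℝ := ∑ i ∈ range (k + 1), ppmf lam i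

noncomputable def cst (lam : ℝ) (k : ℕ) : ℝ := Real.exp lam * k.factorial / lam ^ (k + 1)

noncomputable def pset (lam : ℝ) (A : Set ℕ) : ℝ := ∑' j, A.indicator (ppmf lam) j

noncomputable def gf (lam : ℝ) (A : Set ℕ) : ℕ → ℝ
  | 0 => 0
  | k + 1 => cst lam k * ((∑ j ∈ range (k + 1), A.indicator (ppmf lam) j) - pset lam A * Fc lam k)

noncomputable def gj (lam : ℝ) (j : ℕ) : ℕ → ℝ
  | 0 => 0
  | k + 1 => cst lam k * ppmf lam j * ((if j ≤ k then 1 else 0) - Fc lam k)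

lemma gf_succ (A : Set ℕ) (k : ℕ) :
    gf lam A (k + 1) = cst lam k *
      ((∑ j ∈ range (k + 1), A.indicator (ppmf lam) j) - pset lam A * Fc lam k) := rfl

lemma gj_succ (j k : ℕ) :
    gj lam j (k + 1) = cst lam k * ppmf lam j * ((if j ≤ k then 1 else 0) - Fc lam k) := rfl

lemma Fc_succ (k : ℕ) : Fc lam (k + 1) = Fc lam k + ppmf lam (k + 1) :=
  Finset.sum_range_succ _ _

lemma Fc_nonneg (hlam : 0 < lam) (k : ℕ) : 0 ≤ Fc lam k :=
  Finset.sum_nonneg fun i _ => ppmf_nonneg hlam.le i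

lemma Fc_le_one (hlam : 0 < lam) (k : ℕ) : Fc lam k ≤ 1 := by
  have := Summable.sum_le_tsum (range (k + 1)) (fun i _ => ppmf_nonneg hlam.le i)
    (summable_ppmf (lam := lam))
  rwa [tsum_ppmf] at this

lemma cst_pos (hlam : 0 < lam) (k : ℕ) : 0 < cst lam k := by
  unfold cst
  have := Real.exp_pos lam
  have : (0:ℝ) < k.factorial := by exact_mod_cast k.factorial_pos
  positivity

lemma cst_mul_ppmf (hlam : 0 < lam) (k j : ℕ) :
    cst lam k * ppmf lam j = (k.factorial * lam ^ j) / (j.factorial * lam ^ (k + 1)) := by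
  unfold cst ppmf
  rw [Real.exp_neg]
  have h1 : Real.exp lam ≠ 0 := (Real.exp_pos lam).ne'
  have h2 : (j.factorial : ℝ) ≠ 0 := by exact_mod_cast j.factorial_ne_zero
  have h3 : lam ^ (k + 1) ≠ 0 := pow_ne_zero _ hlam.ne'
  field_simp

lemma cst_mul_ppmf_succ (hlam : 0 < lam) (k : ℕ) :
    cst lam k * ppmf lam (k + 1) = 1 / ((k : ℝ) + 1) := by
  rw [cst_mul_ppmf hlam]
  rw [Nat.factorial_succ]
  have h2 : (k.factorial : ℝ) ≠ 0 := by exact_mod_cast k.factorial_ne_zero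
  have h3 : lam ^ (k + 1) ≠ 0 := pow_ne_zero _ hlam.ne'
  have h4 : ((k : ℝ) + 1) ≠ 0 := by positivity
  push_cast
  field_simp

lemma cst_succ_mul_ppmf_succ (hlam : 0 < lam) (k : ℕ) :
    cst lam (k + 1) * ppmf lam (k + 1) = 1 / lam := by
  rw [cst_mul_ppmf hlam]
  have h2 : ((k+1).factorial : ℝ) ≠ 0 := by exact_mod_cast (k+1).factorial_ne_zero
  have h3 : lam ^ (k + 1) ≠ 0 := pow_ne_zero _ hlam.ne'
  rw [pow_succ]
  field_simp
  ring

lemma lam_mul_cst_succ (hlam : 0 < lam) (k : ℕ) :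
    lam * cst lam (k + 1) = ((k : ℝ) + 1) * cst lam k := by
  unfold cst
  rw [Nat.factorial_succ, pow_succ]
  have h3 : lam ^ (k + 1) ≠ 0 := pow_ne_zero _ hlam.ne'
  push_cast
  field_simp

lemma lam_mul_cst_zero_mul_ppmf_zero (hlam : 0 < lam) :
    lam * (cst lam 0 * ppmf lam 0) = 1 := by
  rw [cst_mul_ppmf hlam]
  simp only [Nat.factorial_zero, pow_zero, pow_one, Nat.cast_one]
  field_simp
  ring

lemma indicator_ppmf_eq (A : Set ℕ) (k : ℕ) :
    A.indicator (ppmf lam) k = A.indicator 1 k * ppmf lam k := by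
  by_cases h : k ∈ A <;> simp [h]

lemma stein_id (hlam : 0 < lam) (A : Set ℕ) (k : ℕ) :
    lam * gf lam A (k + 1) - k * gf lam A k = A.indicator 1 k - pset lam A := by
  cases k with
  | zero =>
    rw [gf_succ]
    have hC := lam_mul_cst_zero_mul_ppmf_zero hlam
    have hind := indicator_ppmf_eq (lam := lam) A 0
    have hF0 : Fc lam 0 = ppmf lam 0 := by simp [Fc]
    rw [Finset.sum_range_one, hF0, hind]
    push_cast
    linear_combination (A.indicator 1 0 - pset lam A) * hC
  | succ k =>
    rw [gf_succ, gf_succ, Finset.sum_range_succ, Fc_succ]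
    have hA := lam_mul_cst_succ hlam k
    have hB : ((k : ℝ) + 1) * (cst lam k * ppmf lam (k + 1)) = 1 := by
      rw [cst_mul_ppmf_succ hlam k]
      field_simp
    have hind := indicator_ppmf_eq (lam := lam) A (k + 1)
    push_cast
    linear_combination
      ((∑ j ∈ range (k + 1), A.indicator (ppmf lam) j) + A.indicator (ppmf lam) (k+1)
        - pset lam A * (Fc lam k + ppmf lam (k+1))) * hA
      + ((k : ℝ) + 1) * cst lam k * hind
      + (A.indicator 1 (k + 1) - pset lam A) * hB


/-- tail representation of `1 - Fc`. -/
lemma one_sub_Fc (hlam : 0 < lam) (k : ℕ) :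
    1 - Fc lam k = ∑' i, ppmf lam (i + (k + 1)) := by
  have h := Summable.sum_add_tsum_nat_add (f := ppmf lam) (k + 1) summable_ppmf
  rw [tsum_ppmf] at h
  unfold Fc
  linarith [h]

lemma summable_sterm (hlam : 0 < lam) (k : ℕ) :
    Summable (fun i : ℕ => (k.factorial : ℝ) * lam ^ i / ((k + 1 + i).factorial : ℝ)) := by
  apply Summable.of_nonneg_of_le (fun i => by positivity)
    (fun i => ?_) (Real.summable_pow_div_factorial lam)
  rw [div_le_div_iff₀ (by positivity) (by positivity)]
  have hdvd : (i.factorial * k.factorial : ℕ) ∣ (i + k).factorial :=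
    Nat.factorial_mul_factorial_dvd_factorial_add i k
  have h1 : (i.factorial * k.factorial : ℕ) ≤ (i + k).factorial :=
    Nat.le_of_dvd (i + k).factorial_pos hdvd
  have h2 : ((i + k).factorial : ℕ) ≤ (k + 1 + i).factorial :=
    Nat.factorial_le (by omega)
  have : (i.factorial * k.factorial : ℝ) ≤ ((k + 1 + i).factorial : ℝ) := by
    exact_mod_cast le_trans h1 h2
  nlinarith [mul_le_mul_of_nonneg_left this (pow_nonneg hlam.le i)]

lemma cst_mul_one_sub_Fc_eq (hlam : 0 < lam) (k : ℕ) :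
    cst lam k * (1 - Fc lam k) = ∑' i, (k.factorial : ℝ) * lam ^ i / ((k + 1 + i).factorial : ℝ) := by
  rw [one_sub_Fc hlam, ← tsum_mul_left]
  congr 1
  funext i
  rw [cst_mul_ppmf hlam]
  have h2 : ((i + (k+1)).factorial : ℝ) ≠ 0 := by
    exact_mod_cast (i + (k+1)).factorial_ne_zero
  have h3 : lam ^ (k + 1) ≠ 0 := pow_ne_zero _ hlam.ne'
  rw [show k + 1 + i = i + (k + 1) from by omega, pow_add]
  field_simp

/-- monotonicity of `cst * (1 - Fc)`. -/
lemma cst_one_sub_Fc_mono (hlam : 0 < lam) (k : ℕ) :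
    cst lam (k + 1) * (1 - Fc lam (k + 1)) ≤ cst lam k * (1 - Fc lam k) := by
  rw [cst_mul_one_sub_Fc_eq hlam, cst_mul_one_sub_Fc_eq hlam]
  apply Summable.tsum_le_tsum _ (summable_sterm hlam (k + 1)) (summable_sterm hlam k)
  intro i
  rw [div_le_div_iff₀ (by positivity) (by positivity)]
  have h1 : ((k+1).factorial : ℝ) = ((k:ℝ) + 1) * k.factorial := by
    rw [Nat.factorial_succ]; push_cast; ring
  have h2 : ((k + 1 + 1 + i).factorial : ℝ) = ((k:ℝ) + 2 + i) * (k + 1 + i).factorial := by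
    have : (k + 1 + 1 + i) = (k + 1 + i) + 1 := by omega
    rw [this, Nat.factorial_succ]; push_cast; ring
  rw [h1, h2]
  have hfpos : (0:ℝ) < (k + 1 + i).factorial := by exact_mod_cast (k + 1 + i).factorial_pos
  have hlpos : (0:ℝ) ≤ lam ^ i := by positivity
  have hkfpos : (0:ℝ) < (k.factorial : ℝ) := by exact_mod_cast k.factorial_pos
  nlinarith [mul_pos hfpos hkfpos, mul_nonneg (mul_nonneg hfpos.le hkfpos.le) hlpos]

/-- monotonicity of `cst * Fc`. -/
lemma cst_Fc_mono (hlam : 0 < lam) (k : ℕ) :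
    cst lam k * Fc lam k ≤ cst lam (k + 1) * Fc lam (k + 1) := by
  unfold Fc
  rw [Finset.mul_sum, Finset.mul_sum, Finset.sum_range_succ' (fun i => cst lam (k+1) * ppmf lam i)]
  have hterm : ∀ i ∈ range (k + 1), cst lam k * ppmf lam i ≤ cst lam (k + 1) * ppmf lam (i + 1) := by
    intro i hi
    rw [Finset.mem_range] at hi
    rw [cst_mul_ppmf hlam, cst_mul_ppmf hlam]
    rw [div_le_div_iff₀ (by positivity) (by positivity)]
    have h1 : ((k+1).factorial : ℝ) = ((k:ℝ) + 1) * k.factorial := by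
      rw [Nat.factorial_succ]; push_cast; ring
    have h2 : ((i+1).factorial : ℝ) = ((i:ℝ) + 1) * i.factorial := by
      rw [Nat.factorial_succ]; push_cast; ring
    rw [h1, h2]
    simp only [pow_succ]
    have hik : (i:ℝ) + 1 ≤ (k:ℝ) + 1 := by
      have : (i:ℝ) ≤ k := by exact_mod_cast Nat.lt_succ_iff.mp hi
      linarith
    have hC : (0:ℝ) ≤ (k.factorial : ℝ) * i.factorial * lam ^ i * lam ^ k * lam * lam := by
      have hif : (0:ℝ) < i.factorial := by exact_mod_cast i.factorial_pos
      have hkf : (0:ℝ) < k.factorial := by exact_mod_cast k.factorial_pos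
      positivity
    nlinarith [mul_le_mul_of_nonneg_left hik hC]
  calc ∑ i ∈ range (k + 1), cst lam k * ppmf lam i
      ≤ ∑ i ∈ range (k + 1), cst lam (k + 1) * ppmf lam (i + 1) :=
        Finset.sum_le_sum hterm
    _ ≤ (∑ i ∈ range (k + 1), cst lam (k + 1) * ppmf lam (i + 1)) + cst lam (k+1) * ppmf lam 0 := by
        have := mul_nonneg (cst_pos hlam (k+1)).le (ppmf_nonneg hlam.le 0)
        linarith


noncomputable def dd (lam : ℝ) (r : ℕ) (j : ℕ) : ℝ := gj lam j (r + 2) - gj lam j (r + 1)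

lemma dd_nonpos (hlam : 0 < lam) {r j : ℕ} (hj : j ≠ r + 1) : dd lam r j ≤ 0 := by
  unfold dd
  rw [gj_succ, gj_succ]
  rcases le_or_gt j r with h | h
  · -- j ≤ r : both indicators are 1
    rw [if_pos (by omega : j ≤ r + 1), if_pos h]
    have hmono := cst_one_sub_Fc_mono hlam r
    have hp := ppmf_nonneg hlam.le j
    nlinarith [hmono, hp]
  · -- j ≥ r + 2 : both indicators are 0
    have hj2 : r + 2 ≤ j := by omega
    rw [if_neg (by omega), if_neg (by omega)]
    have hmono := cst_Fc_mono hlam r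
    have hp := ppmf_nonneg hlam.le j
    nlinarith [hmono, hp]

lemma dd_diag (hlam : 0 < lam) (r : ℕ) :
    dd lam r (r + 1) = (1 - Fc lam (r + 1)) / lam + Fc lam r / ((r : ℝ) + 1) := by
  unfold dd
  rw [gj_succ, gj_succ, if_pos (le_refl (r + 1)), if_neg (by omega)]
  have h1 := cst_succ_mul_ppmf_succ hlam r
  have h2 := cst_mul_ppmf_succ hlam r
  have hl : lam ≠ 0 := hlam.ne'
  have hr : ((r : ℝ) + 1) ≠ 0 := by positivity
  field_simp at h1 h2 ⊢
  linear_combination ((1 - Fc lam (r+1)) * ((r:ℝ)+1)) * h1 + (Fc lam r * lam) * h2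

lemma dd_diag_nonneg (hlam : 0 < lam) (r : ℕ) : 0 ≤ dd lam r (r + 1) := by
  rw [dd_diag hlam]
  have h1 := Fc_le_one hlam (r + 1)
  have h2 := Fc_nonneg hlam r
  have hr : (0:ℝ) < (r : ℝ) + 1 := by positivity
  have : (0:ℝ) ≤ (1 - Fc lam (r+1)) / lam := div_nonneg (by linarith) hlam.le
  have : (0:ℝ) ≤ Fc lam r / ((r:ℝ) + 1) := div_nonneg h2 hr.le
  linarith

lemma ppmf_zero : ppmf lam 0 = Real.exp (-lam) := by
  unfold ppmf; simp

lemma ppmf_succ (hlam : 0 < lam) (i : ℕ) :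
    ppmf lam (i + 1) = ppmf lam i * lam / ((i : ℝ) + 1) := by
  unfold ppmf
  rw [Nat.factorial_succ, pow_succ]
  push_cast
  have h2 : (i.factorial : ℝ) ≠ 0 := by exact_mod_cast i.factorial_ne_zero
  have h4 : ((i : ℝ) + 1) ≠ 0 := by positivity
  field_simp

lemma dd_diag_le (hlam : 0 < lam) (r : ℕ) :
    dd lam r (r + 1) ≤ (1 - Real.exp (-lam)) / lam := by
  rw [dd_diag hlam]
  -- suffices : lam * Fc lam r / (r+1) ≤ Fc lam (r+1) - exp (-lam)
  have key : lam * Fc lam r / ((r : ℝ) + 1) ≤ Fc lam (r + 1) - Real.exp (-lam) := by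
    have hsum : Fc lam (r + 1) - Real.exp (-lam) = ∑ i ∈ range (r + 1), ppmf lam (i + 1) := by
      unfold Fc
      rw [Finset.sum_range_succ' (fun i => ppmf lam i) (r + 1), ppmf_zero]
      ring
    rw [hsum]
    have hterm : ∀ i ∈ range (r + 1), ppmf lam i * lam / ((r : ℝ) + 1) ≤ ppmf lam (i + 1) := by
      intro i hi
      rw [Finset.mem_range] at hi
      rw [ppmf_succ hlam i]
      have hii : ((i : ℝ) + 1) ≤ ((r : ℝ) + 1) := by
        have : (i:ℝ) ≤ r := by exact_mod_cast Nat.lt_succ_iff.mp hi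
        linarith
      have hp := ppmf_nonneg hlam.le i
      have h1 : (0:ℝ) < (i : ℝ) + 1 := by positivity
      have h2 : (0:ℝ) < (r : ℝ) + 1 := by positivity
      rw [div_le_div_iff₀ h2 h1]
      nlinarith [mul_nonneg hp hlam.le]
    calc lam * Fc lam r / ((r : ℝ) + 1)
        = ∑ i ∈ range (r + 1), ppmf lam i * lam / ((r : ℝ) + 1) := by
          unfold Fc
          rw [Finset.mul_sum, Finset.sum_div]
          exact Finset.sum_congr rfl fun i _ => by ring
      _ ≤ ∑ i ∈ range (r + 1), ppmf lam (i + 1) := Finset.sum_le_sum hterm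
  have hr : (0:ℝ) < (r : ℝ) + 1 := by positivity
  rw [div_add' _ _ _ hlam.ne', div_le_div_iff₀ hlam hlam]
  have : Fc lam r / ((r : ℝ) + 1) * lam = lam * Fc lam r / ((r : ℝ) + 1) := by ring
  nlinarith [key]


lemma abs_gj_le (hlam : 0 < lam) (j k : ℕ) :
    |gj lam j (k + 1)| ≤ (2 * cst lam k) * ppmf lam j := by
  rw [gj_succ, abs_mul, abs_mul]
  have hc := cst_pos hlam k
  have hp := ppmf_nonneg hlam.le j
  have hF0 := Fc_nonneg hlam k
  have hF1 := Fc_le_one hlam k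
  have habs : |(if j ≤ k then (1:ℝ) else 0) - Fc lam k| ≤ 2 := by
    rw [abs_le]
    constructor <;> [skip; skip] <;> split_ifs <;> simp <;> linarith
  calc |cst lam k| * |ppmf lam j| * |(if j ≤ k then (1:ℝ) else 0) - Fc lam k|
      ≤ |cst lam k| * |ppmf lam j| * 2 := by
        apply mul_le_mul_of_nonneg_left habs (by positivity)
    _ = (2 * cst lam k) * ppmf lam j := by
        rw [abs_of_pos hc, abs_of_nonneg hp]; ring

lemma summable_gj (hlam : 0 < lam) (k : ℕ) : Summable (fun j => gj lam j (k + 1)) := by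
  apply Summable.of_abs
  apply Summable.of_nonneg_of_le (fun j => abs_nonneg _) (abs_gj_le hlam · k)
  exact summable_ppmf.mul_left _

lemma summable_dd (hlam : 0 < lam) (r : ℕ) : Summable (dd lam r) :=
  (summable_gj hlam (r + 1)).sub (summable_gj hlam r)

lemma summable_ind_ppmf (hlam : 0 < lam) (A : Set ℕ) :
    Summable (A.indicator (ppmf lam)) :=
  (summable_ppmf (lam := lam)).indicator A

lemma gf_eq_tsum (hlam : 0 < lam) (A : Set ℕ) (k : ℕ) :
    gf lam A (k + 1) = ∑' j, A.indicator (fun j => gj lam j (k + 1)) j := by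
  have hind : ∀ j, A.indicator (fun j => gj lam j (k + 1)) j
      = cst lam k * ((if j ≤ k then (1:ℝ) else 0) * A.indicator (ppmf lam) j)
        - cst lam k * Fc lam k * A.indicator (ppmf lam) j := by
    intro j
    by_cases h : j ∈ A
    · simp only [Set.indicator_of_mem h, gj_succ]
      ring
    · simp only [Set.indicator_of_notMem h]
      ring
  have hs1 : Summable (fun j => cst lam k * ((if j ≤ k then (1:ℝ) else 0) * A.indicator (ppmf lam) j)) := by
    apply Summable.mul_left
    have hnn : ∀ j, 0 ≤ A.indicator (ppmf lam) j :=
      fun j => Set.indicator_apply_nonneg fun _ => ppmf_nonneg hlam.le j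
    apply Summable.of_nonneg_of_le
      (fun j => by split_ifs <;> simp [hnn j])
      (fun j => ?_) (summable_ind_ppmf hlam A)
    split_ifs with h
    · simp
    · simpa using hnn j
  have hs2 : Summable (fun j => cst lam k * Fc lam k * A.indicator (ppmf lam) j) :=
    (summable_ind_ppmf hlam A).mul_left _
  calc gf lam A (k + 1)
      = cst lam k * (∑ j ∈ range (k + 1), A.indicator (ppmf lam) j) -
          cst lam k * Fc lam k * pset lam A := by
        rw [gf_succ]; ring
    _ = (∑' j, cst lam k * ((if j ≤ k then (1:ℝ) else 0) * A.indicator (ppmf lam) j))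
        - ∑' j, cst lam k * Fc lam k * A.indicator (ppmf lam) j := by
        congr 1
        · rw [tsum_eq_sum (s := range (k + 1)) (fun j hj => by
            rw [if_neg (by simpa using hj)]; ring)]
          rw [Finset.mul_sum]
          apply Finset.sum_congr rfl
          intro j hj
          rw [Finset.mem_range] at hj
          rw [if_pos (by omega)]
          ring
        · unfold pset
          rw [tsum_mul_left]
    _ = ∑' j, A.indicator (fun j => gj lam j (k + 1)) j := by
        rw [← Summable.tsum_sub hs1 hs2]
        exact tsum_congr fun j => (hind j).symm

lemma pset_univ (hlam : 0 < lam) : pset lam Set.univ = 1 := by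
  unfold pset
  rw [Set.indicator_univ]
  exact tsum_ppmf

lemma tsum_gj_eq_zero (hlam : 0 < lam) (k : ℕ) : ∑' j, gj lam j (k + 1) = 0 := by
  have h := gf_eq_tsum hlam Set.univ k
  rw [Set.indicator_univ] at h
  rw [← h, gf_succ, pset_univ hlam]
  have : (∑ j ∈ range (k + 1), (Set.univ : Set ℕ).indicator (ppmf lam) j) = Fc lam k := by
    rw [Set.indicator_univ]; rfl
  rw [this]
  ring

lemma tsum_dd_eq_zero (hlam : 0 < lam) (r : ℕ) : ∑' j, dd lam r j = 0 := by
  unfold dd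
  rw [Summable.tsum_sub (summable_gj hlam (r + 1)) (summable_gj hlam r),
    tsum_gj_eq_zero hlam, tsum_gj_eq_zero hlam]
  ring

lemma tsum_ind_dd_le (hlam : 0 < lam) (A : Set ℕ) (r : ℕ) :
    ∑' j, A.indicator (dd lam r) j ≤ (1 - Real.exp (-lam)) / lam := by
  have hsum : Summable (A.indicator (dd lam r)) := (summable_dd hlam r).indicator A
  have hsingle : Summable (fun j => if j = r + 1 then dd lam r (r + 1) else 0) := by
    apply summable_of_ne_finset_zero (s := {r + 1})
    intro j hj
    rw [if_neg (by simpa using hj)]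
  have hle : ∀ j, A.indicator (dd lam r) j ≤ (if j = r + 1 then dd lam r (r + 1) else 0) := by
    intro j
    by_cases hj : j = r + 1
    · subst hj
      rw [if_pos rfl]
      by_cases h : (r + 1) ∈ A
      · rw [Set.indicator_of_mem h]
      · rw [Set.indicator_of_notMem h]
        exact dd_diag_nonneg hlam r
    · rw [if_neg hj]
      by_cases h : j ∈ A
      · rw [Set.indicator_of_mem h]
        exact dd_nonpos hlam hj
      · rw [Set.indicator_of_notMem h]
  calc ∑' j, A.indicator (dd lam r) j
      ≤ ∑' j, (if j = r + 1 then dd lam r (r + 1) else 0) := Summable.tsum_le_tsum hle hsum hsingle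
    _ = dd lam r (r + 1) := tsum_ite_eq (r + 1) _
    _ ≤ (1 - Real.exp (-lam)) / lam := dd_diag_le hlam r

lemma abs_tsum_ind_dd_le (hlam : 0 < lam) (A : Set ℕ) (r : ℕ) :
    |∑' j, A.indicator (dd lam r) j| ≤ (1 - Real.exp (-lam)) / lam := by
  rw [abs_le]
  refine ⟨?_, tsum_ind_dd_le hlam A r⟩
  have hsplit : ∑' j, A.indicator (dd lam r) j + ∑' j, Aᶜ.indicator (dd lam r) j = 0 := by
    rw [← Summable.tsum_add ((summable_dd hlam r).indicator A) ((summable_dd hlam r).indicator Aᶜ)]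
    rw [← tsum_dd_eq_zero hlam r]
    exact tsum_congr fun j => by
      by_cases h : j ∈ A
      · simp [Set.indicator_of_mem h, Set.indicator_of_notMem (by simpa using h : j ∉ Aᶜ)]
      · simp [Set.indicator_of_notMem h, Set.indicator_of_mem (by simpa using h : j ∈ Aᶜ)]
  have := tsum_ind_dd_le hlam Aᶜ r
  linarith

lemma abs_gf_diff_le (hlam : 0 < lam) (A : Set ℕ) (r : ℕ) :
    |gf lam A (r + 2) - gf lam A (r + 1)| ≤ (1 - Real.exp (-lam)) / lam := by
  have h : gf lam A (r + 2) - gf lam A (r + 1) = ∑' j, A.indicator (dd lam r) j := by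
    rw [gf_eq_tsum hlam A (r + 1), gf_eq_tsum hlam A r,
      ← Summable.tsum_sub (((summable_gj hlam (r+1)).indicator A)) ((summable_gj hlam r).indicator A)]
    exact tsum_congr fun j => by
      by_cases hj : j ∈ A <;>
        simp [Set.indicator_of_mem, Set.indicator_of_notMem, hj, dd]
  rw [h]
  exact abs_tsum_ind_dd_le hlam A r


lemma indicator_bpmf_eq {p : ℝ} (n : ℕ) (A : Set ℕ) (k : ℕ) :
    A.indicator (bpmf p n) k = bpmf p n k * A.indicator 1 k := by
  by_cases h : k ∈ A <;> simp [h]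

lemma key_bound {p : ℝ} (hp0 : 0 < p) (hp1 : p < 1) (m : ℕ) (A : Set ℕ) :
    |(∑ k ∈ range (m + 2), A.indicator (bpmf p (m + 1)) k) - pset (((m:ℝ) + 1) * p) A|
      ≤ (((m:ℝ) + 1) * p ^ 2) * ((1 - Real.exp (-(((m:ℝ) + 1) * p))) / (((m:ℝ) + 1) * p)) := by
  set lam := ((m : ℝ) + 1) * p with hlamdef
  have hlam : 0 < lam := by positivity
  -- step 1: difference as expectation of the Stein operator
  have hdiff : (∑ k ∈ range (m + 2), A.indicator (bpmf p (m + 1)) k) - pset lam A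
      = ∑ k ∈ range (m + 2), bpmf p (m + 1) k * (lam * gf lam A (k + 1) - (k : ℝ) * gf lam A k) := by
    have h1 : ∀ k, bpmf p (m+1) k * (lam * gf lam A (k+1) - (k:ℝ) * gf lam A k)
        = A.indicator (bpmf p (m+1)) k - bpmf p (m+1) k * pset lam A := by
      intro k
      have hst := stein_id hlam A k
      rw [indicator_bpmf_eq]
      linear_combination bpmf p (m+1) k * hst
    rw [Finset.sum_congr rfl (fun k _ => h1 k), Finset.sum_sub_distrib, ← Finset.sum_mul,
      sum_bpmf]
    ring
  -- step 2: split the sum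
  have hsplit : ∑ k ∈ range (m + 2), bpmf p (m+1) k * (lam * gf lam A (k+1) - (k:ℝ) * gf lam A k)
      = lam * (∑ k ∈ range (m+2), bpmf p (m+1) k * gf lam A (k+1))
        - ∑ k ∈ range (m+2), (k:ℝ) * bpmf p (m+1) k * gf lam A k := by
    have h2 : ∀ k ∈ range (m+2), bpmf p (m+1) k * (lam * gf lam A (k+1) - (k:ℝ) * gf lam A k)
        = lam * (bpmf p (m+1) k * gf lam A (k+1)) - (k:ℝ) * bpmf p (m+1) k * gf lam A k :=
      fun k _ => by ring
    rw [Finset.sum_congr rfl h2, Finset.sum_sub_distrib, ← Finset.mul_sum]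
  -- step 3: size-bias identity
  have hS0 : ∑ k ∈ range (m+2), (k:ℝ) * bpmf p (m+1) k * gf lam A k
      = lam * ∑ k ∈ range (m+1), bpmf p m k * gf lam A (k+1) := by
    rw [Finset.sum_range_succ' (fun k => (k:ℝ) * bpmf p (m+1) k * gf lam A k) (m+1)]
    simp only [Nat.cast_zero, zero_mul, add_zero]
    rw [Finset.mul_sum]
    apply Finset.sum_congr rfl
    intro k _
    have hmul := bpmf_mul_succ (p := p) m k
    push_cast
    linear_combination gf lam A (k+1) * hmul
  -- step 4: Pascal identity
  have hb1 : (∑ k ∈ range (m+1), bpmf p (m+1) (k+1) * gf lam A (k+1+1))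
      = ∑ k ∈ range (m+1), bpmf p (m+1) (k+1) * gf lam A (k+2) :=
    Finset.sum_congr rfl fun k _ => rfl
  have hb2 : (∑ k ∈ range (m+1), bpmf p m (k+1) * gf lam A (k+1+1))
      = ∑ k ∈ range (m+1), bpmf p m (k+1) * gf lam A (k+2) :=
    Finset.sum_congr rfl fun k _ => rfl
  have hS1 : ∑ k ∈ range (m+2), bpmf p (m+1) k * gf lam A (k+1)
      = (1-p) * (∑ k ∈ range (m+1), bpmf p m k * gf lam A (k+1))
        + p * (∑ k ∈ range (m+1), bpmf p m k * gf lam A (k+2)) := by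
    have e1 : ∑ k ∈ range (m+2), bpmf p (m+1) k * gf lam A (k+1)
        = (∑ k ∈ range (m+1), bpmf p (m+1) (k+1) * gf lam A (k+2))
          + bpmf p (m+1) 0 * gf lam A 1 :=
      (Finset.sum_range_succ' (fun k => bpmf p (m+1) k * gf lam A (k+1)) (m+1)).trans
        (by rw [hb1])
    have e2 : ∑ k ∈ range (m+2), bpmf p m k * gf lam A (k+1)
        = (∑ k ∈ range (m+1), bpmf p m (k+1) * gf lam A (k+2))
          + bpmf p m 0 * gf lam A 1 :=
      (Finset.sum_range_succ' (fun k => bpmf p m k * gf lam A (k+1)) (m+1)).trans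
        (by rw [hb2])
    have e3 : ∑ k ∈ range (m+2), bpmf p m k * gf lam A (k+1)
        = ∑ k ∈ range (m+1), bpmf p m k * gf lam A (k+1) := by
      rw [Finset.sum_range_succ, bpmf_eq_zero (by omega), zero_mul, add_zero]
    have e4 : ∑ k ∈ range (m+1), bpmf p (m+1) (k+1) * gf lam A (k+2)
        = (1-p) * (∑ k ∈ range (m+1), bpmf p m (k+1) * gf lam A (k+2))
          + p * (∑ k ∈ range (m+1), bpmf p m k * gf lam A (k+2)) := by
      rw [Finset.mul_sum, Finset.mul_sum, ← Finset.sum_add_distrib]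
      apply Finset.sum_congr rfl
      intro k _
      rw [bpmf_pascal]
      ring
    have e5 : bpmf p (m+1) 0 * gf lam A 1 = (1-p) * (bpmf p m 0 * gf lam A 1) := by
      rw [bpmf_zero_succ]; ring
    -- combine e1-e5
    rw [e1, e4, e5]
    have e6 : ∑ k ∈ range (m+1), bpmf p m (k+1) * gf lam A (k+2)
        = (∑ k ∈ range (m+1), bpmf p m k * gf lam A (k+1)) - bpmf p m 0 * gf lam A 1 := by
      rw [← e3, e2]; ring
    rw [e6]
    ring
  -- combine
  have hcomb : (∑ k ∈ range (m + 2), A.indicator (bpmf p (m + 1)) k) - pset lam A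
      = lam * p * ∑ k ∈ range (m+1), bpmf p m k * (gf lam A (k+2) - gf lam A (k+1)) := by
    rw [hdiff, hsplit, hS0, hS1]
    have e1 : ∑ k ∈ range (m+1), bpmf p m k * (gf lam A (k+2) - gf lam A (k+1))
        = (∑ k ∈ range (m+1), bpmf p m k * gf lam A (k+2))
          - ∑ k ∈ range (m+1), bpmf p m k * gf lam A (k+1) := by
      rw [← Finset.sum_sub_distrib]
      exact Finset.sum_congr rfl fun k _ => by ring
    rw [e1]
    ring
  rw [hcomb]
  set eps := (1 - Real.exp (-lam)) / lam with heps
  have heps_nonneg : 0 ≤ eps := by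
    apply div_nonneg _ hlam.le
    have := Real.exp_le_one_iff.mpr (by linarith : -lam ≤ 0)
    linarith
  have habs : |∑ k ∈ range (m+1), bpmf p m k * (gf lam A (k+2) - gf lam A (k+1))| ≤ eps := by
    calc |∑ k ∈ range (m+1), bpmf p m k * (gf lam A (k+2) - gf lam A (k+1))|
        ≤ ∑ k ∈ range (m+1), |bpmf p m k * (gf lam A (k+2) - gf lam A (k+1))| :=
          Finset.abs_sum_le_sum_abs _ _
      _ ≤ ∑ k ∈ range (m+1), bpmf p m k * eps := by
          apply Finset.sum_le_sum
          intro k _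
          rw [abs_mul, abs_of_nonneg (bpmf_nonneg hp0.le hp1.le m k)]
          exact mul_le_mul_of_nonneg_left (abs_gf_diff_le hlam A k)
            (bpmf_nonneg hp0.le hp1.le m k)
      _ = eps := by rw [← Finset.sum_mul, sum_bpmf, one_mul]
  calc |lam * p * ∑ k ∈ range (m+1), bpmf p m k * (gf lam A (k+2) - gf lam A (k+1))|
      = lam * p * |∑ k ∈ range (m+1), bpmf p m k * (gf lam A (k+2) - gf lam A (k+1))| := by
        rw [abs_mul, abs_of_nonneg (by positivity : (0:ℝ) ≤ lam * p)]
    _ ≤ lam * p * eps := mul_le_mul_of_nonneg_left habs (by positivity)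
    _ = (((m:ℝ) + 1) * p ^ 2) * eps := by rw [hlamdef]; ring

end Stein

end LeCamAux

open LeCamAux

theorem leCam_barbourHall_binomial {n : ℕ} {Ω : Type*} [MeasurableSpace Ω]
    (P : Measure Ω) [IsProbabilityMeasure P]
    (p : ℝ) (hp0 : 0 < p) (hp1 : p < 1)
    (X : Fin n → Ω → ℕ) (hXmeas : ∀ i, Measurable (X i))
    (hindep : iIndepFun X P)
    (hBer1 : ∀ i, P (X i ⁻¹' {1}) = ENNReal.ofReal p)
    (hBer0 : ∀ i, P (X i ⁻¹' {0}) = ENNReal.ofReal (1 - p)) :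
    dTVNat (Measure.map (fun ω => ∑ i : Fin n, X i ω) P) (poissonNat (n * p))
      ≤ min (n * p ^ 2) p := by
  have hSmeas : Measurable (fun ω => ∑ i : Fin n, X i ω) :=
    Finset.measurable_sum _ (fun i _ => hXmeas i)
  have hmap : Measure.map (fun ω => ∑ i : Fin n, X i ω) P
      = Measure.sum fun k => (ENNReal.ofReal (bpmf p n k)) • Measure.dirac k := by
    rw [MeasureTheory.Measure.ext_iff_singleton]
    intro k
    rw [Measure.map_apply hSmeas MeasurableSet.of_discrete, wsum_singleton]
    have := measure_sum_bernoulli P hp0 hp1 X hXmeas hindep hBer1 hBer0 Finset.univ k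
    simpa [Finset.card_univ] using this
  have hpois : poissonNat ((n : ℝ) * p)
      = Measure.sum fun k => (ENNReal.ofReal (ppmf ((n : ℝ) * p) k)) • Measure.dirac k := rfl
  have hnp : (0:ℝ) ≤ (n : ℝ) * p := by positivity
  rw [hmap]
  unfold dTVNat
  apply ciSup_le
  intro A
  rw [wsum_apply_toReal (bpmf_nonneg hp0.le hp1.le n) (summable_bpmf n), hpois,
    wsum_apply_toReal (ppmf_nonneg hnp) summable_ppmf]
  have hbin : ∑' k, A.indicator (bpmf p n) k = ∑ k ∈ range (n + 1), A.indicator (bpmf p n) k := by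
    apply tsum_eq_sum
    intro k hk
    rw [Finset.mem_range, not_lt] at hk
    by_cases h : k ∈ A
    · rw [Set.indicator_of_mem h, bpmf_eq_zero (by omega)]
    · rw [Set.indicator_of_notMem h]
  rw [hbin]
  cases n with
  | zero =>
    have h0 : ((0:ℕ) : ℝ) * p = 0 := by norm_num
    have hppmf0 : ∀ k, k ≠ 0 → A.indicator (ppmf ((0:ℕ) * p : ℝ)) k = 0 := by
      intro k hk
      have : ppmf (((0:ℕ):ℝ) * p) k = 0 := by
        unfold ppmf
        rw [h0, zero_pow hk]
        simp
      by_cases h : k ∈ A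
      · rw [Set.indicator_of_mem h, this]
      · rw [Set.indicator_of_notMem h]
    have htp : ∑' k, A.indicator (ppmf (((0:ℕ):ℝ) * p)) k
        = A.indicator (ppmf (((0:ℕ):ℝ) * p)) 0 := tsum_eq_single 0 hppmf0
    have hp00 : ppmf (((0:ℕ):ℝ) * p) 0 = 1 := by
      unfold ppmf
      rw [h0]
      simp
    have hb00 : bpmf p 0 0 = 1 := by unfold bpmf; simp
    rw [htp]
    have : ∑ k ∈ range (0 + 1), A.indicator (bpmf p 0) k = A.indicator (bpmf p 0) 0 := by
      simp
    rw [this]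
    have heq : A.indicator (bpmf p 0) 0 = A.indicator (ppmf (((0:ℕ):ℝ) * p)) 0 := by
      by_cases h : (0:ℕ) ∈ A
      · rw [Set.indicator_of_mem h, Set.indicator_of_mem h, hb00, hp00]
      · rw [Set.indicator_of_notMem h, Set.indicator_of_notMem h]
    rw [heq, sub_self, abs_zero]
    apply le_min _ hp0.le
    norm_num
  | succ m =>
    have hcast : (((m + 1 : ℕ)) : ℝ) = (m : ℝ) + 1 := by push_cast; ring
    have hlam : (0:ℝ) < ((m:ℝ) + 1) * p := by positivity
    have hkey := key_bound hp0 hp1 m A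
    have hgoal : |(∑ k ∈ range (m + 1 + 1), A.indicator (bpmf p (m + 1)) k)
        - ∑' k, A.indicator (ppmf (((m + 1 : ℕ) : ℝ) * p)) k|
        ≤ (((m:ℝ) + 1) * p ^ 2) * ((1 - Real.exp (-(((m:ℝ) + 1) * p))) / (((m:ℝ) + 1) * p)) := by
      rw [hcast]
      exact hkey
    refine le_trans hgoal ?_
    set e := Real.exp (-(((m:ℝ) + 1) * p)) with he
    have he0 : 0 < e := Real.exp_pos _
    have he1 : 1 - e ≤ ((m:ℝ) + 1) * p := by
      have := Real.add_one_le_exp (-(((m:ℝ) + 1) * p))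
      linarith
    apply le_min
    · rw [hcast]
      have hx1 : (1 - e) / (((m:ℝ) + 1) * p) ≤ 1 := by
        rw [div_le_one hlam]
        exact he1
      have hC : (0:ℝ) ≤ ((m:ℝ) + 1) * p ^ 2 := by positivity
      exact mul_le_of_le_one_right hC hx1
    · have hEq : (((m:ℝ) + 1) * p ^ 2) * ((1 - e) / (((m:ℝ) + 1) * p)) = p * (1 - e) := by
        field_simp
      rw [hEq]
      nlinarith [he0]
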